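/- With notation as above, the Euclidean distance between the linear varieties V_b and V_c satisfies d(V_b, V_c) = ‖b* − c*‖ = ‖A A⁺ d − d‖, where d = c − b, A = [B | C], b* = b + B u*, c* = c − C v*, and (u*, v*) = A⁺ d. -/

import Mathlib

open Matrix

/-!
The difference `(b + B u) - (c - C v)` equals `A (u, v) - d`, so the distance between the two
varieties is the least residual of the linear least-squares problem `A x ≈ d`. The Penrose
equations give the normal equations `Aᵀ (A A⁺ d - d) = 0`, so for every `x` the residual
`A x - d` splits orthogonally as `A (x - A⁺ d) + (A A⁺ d - d)`, and Pythagoras shows that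
`x = A⁺ d` attains the minimum.
-/

noncomputable def eucNorm {ι : Type*} [Fintype ι] (v : ι → ℝ) : ℝ :=
  ‖(WithLp.equiv 2 (ι → ℝ)).symm v‖

/-- The four Penrose equations characterizing the Moore-Penrose inverse. -/
def IsMoorePenrose {ι κ : Type*} [Fintype ι] [Fintype κ]
    (A : Matrix ι κ ℝ) (Ap : Matrix κ ι ℝ) : Prop :=
  A * Ap * A = A ∧ Ap * A * Ap = Ap ∧ (A * Ap)ᵀ = A * Ap ∧ (Ap * A)ᵀ = Ap * A

lemma eucNorm_le_eucNorm_add_of_dotProduct_eq_zero {ι : Type*} [Fintype ι] {a b : ι → ℝ}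
    (h : a ⬝ᵥ b = 0) :
    eucNorm b ≤ eucNorm (a + b) := by
  change ‖WithLp.toLp 2 b‖ ≤ ‖WithLp.toLp 2 (a + b)‖
  have horth : inner ℝ (WithLp.toLp 2 a) (WithLp.toLp 2 b) = 0 := by
    simpa [PiLp.inner_apply, dotProduct, mul_comm] using h
  rw [mul_self_le_mul_self_iff (norm_nonneg _) (norm_nonneg _), WithLp.toLp_add,
    norm_add_sq_eq_norm_sq_add_norm_sq_real horth]
  exact le_add_of_nonneg_left (mul_self_nonneg _)

namespace IsMoorePenrose

variable {ι κ : Type*} [Fintype ι] [Fintype κ] {A : Matrix ι κ ℝ} {Ap : Matrix κ ι ℝ}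

lemma transpose_mul_mul (h : IsMoorePenrose A Ap) : Aᵀ * (A * Ap) = Aᵀ := by
  obtain ⟨hAApA, -, hsymm, -⟩ := h
  rw [← hsymm, ← transpose_mul, hAApA]

lemma transpose_mulVec_residual (h : IsMoorePenrose A Ap) (d : ι → ℝ) :
    Aᵀ *ᵥ (A *ᵥ (Ap *ᵥ d) - d) = 0 := by
  rw [mulVec_sub, mulVec_mulVec, mulVec_mulVec, Matrix.mul_assoc, h.transpose_mul_mul, sub_self]

lemma eucNorm_residual_le (h : IsMoorePenrose A Ap) (d : ι → ℝ) (x : κ → ℝ) :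
    eucNorm (A *ᵥ (Ap *ᵥ d) - d) ≤ eucNorm (A *ᵥ x - d) := by
  have horth : A *ᵥ (x - Ap *ᵥ d) ⬝ᵥ (A *ᵥ (Ap *ᵥ d) - d) = 0 := by
    rw [← vecMul_transpose, ← dotProduct_mulVec, h.transpose_mulVec_residual, dotProduct_zero]
  have hsplit : A *ᵥ x - d = A *ᵥ (x - Ap *ᵥ d) + (A *ᵥ (Ap *ᵥ d) - d) := by
    rw [mulVec_sub]; abel
  rw [hsplit]
  exact eucNorm_le_eucNorm_add_of_dotProduct_eq_zero horth

end IsMoorePenrose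

lemma add_mulVec_sub_sub_mulVec_eq_fromCols_mulVec {m κ₁ κ₂ : Type*} [Fintype κ₁] [Fintype κ₂]
    (b c : m → ℝ) (B : Matrix m κ₁ ℝ) (C : Matrix m κ₂ ℝ) (u : κ₁ → ℝ) (v : κ₂ → ℝ) :
    (b + B *ᵥ u) - (c - C *ᵥ v) = fromCols B C *ᵥ Sum.elim u v - (c - b) := by
  rw [fromCols_mulVec_sumElim]; abel

theorem distance_formula {m l₁ l₂ : ℕ} (b c : Fin m → ℝ)
    (B : Matrix (Fin m) (Fin l₁) ℝ) (C : Matrix (Fin m) (Fin l₂) ℝ)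
    (A : Matrix (Fin m) (Fin l₁ ⊕ Fin l₂) ℝ) (hA : A = fromCols B C)
    (Ap : Matrix (Fin l₁ ⊕ Fin l₂) (Fin m) ℝ) (hAp : IsMoorePenrose A Ap)
    (d : Fin m → ℝ) (hd : d = c - b)
    (xstar : Fin l₁ ⊕ Fin l₂ → ℝ) (hx : xstar = Ap.mulVec d)
    (ustar : Fin l₁ → ℝ) (hu : ustar = fun i => xstar (Sum.inl i))
    (vstar : Fin l₂ → ℝ) (hv : vstar = fun j => xstar (Sum.inr j))
    (bstar cstar : Fin m → ℝ)
    (hb : bstar = b + B.mulVec ustar) (hc : cstar = c - C.mulVec vstar) :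
    sInf {r : ℝ | ∃ u v, r = eucNorm ((b + B.mulVec u) - (c - C.mulVec v))} =
        eucNorm (bstar - cstar) ∧
      eucNorm (bstar - cstar) = eucNorm (A.mulVec (Ap.mulVec d) - d) := by
  have hxstar : Sum.elim ustar vstar = xstar := by
    rw [hu, hv]; exact Sum.elim_comp_inl_inr xstar
  have hstar : bstar - cstar = A *ᵥ (Ap *ᵥ d) - d := by
    rw [hb, hc, add_mulVec_sub_sub_mulVec_eq_fromCols_mulVec, hxstar, hx, hA, hd]
  have hleast : IsLeast {r : ℝ | ∃ u v, r = eucNorm ((b + B.mulVec u) - (c - C.mulVec v))}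
      (eucNorm (bstar - cstar)) := by
    refine ⟨⟨ustar, vstar, by rw [hb, hc]⟩, ?_⟩
    rintro r ⟨u, v, rfl⟩
    rw [hstar, add_mulVec_sub_sub_mulVec_eq_fromCols_mulVec, ← hA, ← hd]
    exact hAp.eucNorm_residual_le d _
  exact ⟨hleast.csInf_eq, by rw [hstar]⟩
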